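/- arXiv:2108.12017 — 2 statements merged into one kernel-verified Lean document; each statement's English description precedes it below -/
import Mathlib

section
/- Let f ∈ ℕⁿ be a frequency vector with m = ∑_i f_i > 0, and let G : ℕ → ℝ≥0 satisfy G(0) = 0 and 0 ≤ G(x) - G(x-1) ≤ ζ for all x ≥ 1 with ζ > 0. Consider the random process that picks a stream position uniformly at random (i.e., picks coordinate i and occurrence index j ∈ {1,...,f_i} with probability 1/m each), and then accepts with probability (G(f_i - j + 1) - G(f_i - j))/ζ. Then the probability that coordinate i is accepted equals G(f_i)/(ζ·m). -/
open Finset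

lemma Finset.sum_Icc_one_comp_sub {M : Type*} [AddCommMonoid M] (g : ℕ → M) (k : ℕ) :
    ∑ j ∈ Icc 1 k, g (k - j) = ∑ t ∈ range k, g t := by
  apply sum_nbij' (fun j => k - j) (fun t => k - t) <;> intro _ _ <;> simp_all <;> omega

lemma Finset.sum_Icc_one_sub_telescope {M : Type*} [AddCommGroup M] (G : ℕ → M) (k : ℕ) :
    ∑ j ∈ Icc 1 k, (G (k - j + 1) - G (k - j)) = G k - G 0 :=
  (sum_Icc_one_comp_sub (fun t => G (t + 1) - G t) k).trans (sum_range_sub G k)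

theorem sampler_accept_prob_general (n : ℕ) (f : Fin n → ℕ) (m : ℕ) (G : ℕ → ℝ) (hG0 : G 0 = 0)
    (ζ : ℝ) (i : Fin n) :
    ∑ j ∈ Finset.Icc 1 (f i), (1 / (m : ℝ)) * ((G (f i - j + 1) - G (f i - j)) / ζ)
      = G (f i) / (ζ * m) := by
  rw [← mul_sum, ← sum_div, sum_Icc_one_sub_telescope, hG0, sub_zero, one_div_mul_eq_div,
    div_div, mul_comm]

/-- In the truly perfect `G`-sampler framework: pick a stream position uniformly at
random (coordinate `i` together with occurrence index `j ∈ {1,…,f i}`, each with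
probability `1/m`), then accept with probability `(G (f i - j + 1) - G (f i - j))/ζ`.
The probability that coordinate `i` is accepted equals `G (f i) / (ζ * m)`. -/
theorem sampler_accept_prob (n : ℕ) (f : Fin n → ℕ) (m : ℕ) (hm : m = ∑ i, f i)
    (hm0 : 0 < m) (G : ℕ → ℝ) (hG0 : G 0 = 0) (ζ : ℝ) (hζ : 0 < ζ)
    (hdiff : ∀ x : ℕ, 1 ≤ x → 0 ≤ G x - G (x - 1) ∧ G x - G (x - 1) ≤ ζ)
    (i : Fin n) :
    ∑ j ∈ Finset.Icc 1 (f i), (1 / (m : ℝ)) * ((G (f i - j + 1) - G (f i - j)) / ζ)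
      = G (f i) / (ζ * m) :=
  sampler_accept_prob_general n f m G hG0 ζ i
end

section
/- Under the sampling process of the truly perfect G-sampler framework, the probability that some coordinate is accepted (i.e., the process does not fail) equals F_G/(ζ·m), where F_G = ∑_{i=1}^n G(f_i). -/
open Finset

lemma telescope_aux (G : ℕ → ℝ) (hG0 : G 0 = 0) (k : ℕ) :
    ∑ j ∈ Finset.Icc 1 k, (G (k - j + 1) - G (k - j)) = G k := by
  have h : ∑ j ∈ Finset.Icc 1 k, (G (k - j + 1) - G (k - j))
      = ∑ i ∈ Finset.range k, (G (i + 1) - G i) := by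
    apply Finset.sum_nbij' (fun j => k - j) (fun i => k - i)
    · intro j hj
      simp only [Finset.mem_Icc] at hj
      simp only [Finset.mem_range]
      omega
    · intro i hi
      simp only [Finset.mem_range] at hi
      simp only [Finset.mem_Icc]
      omega
    · intro j hj; simp only [Finset.mem_Icc] at hj; omega
    · intro i hi; simp only [Finset.mem_range] at hi; omega
    · intro j hj; rfl
  rw [h, Finset.sum_range_sub, hG0, sub_zero]

/-- In the truly perfect `G`-sampler framework, the probability that some coordinate
is accepted (i.e., the process does not fail) equals `F_G / (ζ * m)`, where
`F_G = ∑ i, G (f i)`. -/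
theorem sampler_success_prob (n : ℕ) (f : Fin n → ℕ) (m : ℕ) (hm : m = ∑ i, f i)
    (hm0 : 0 < m) (G : ℕ → ℝ) (hG0 : G 0 = 0) (ζ : ℝ) (hζ : 0 < ζ)
    (hdiff : ∀ x : ℕ, 1 ≤ x → 0 ≤ G x - G (x - 1) ∧ G x - G (x - 1) ≤ ζ) :
    ∑ i, ∑ j ∈ Finset.Icc 1 (f i),
        (1 / (m : ℝ)) * ((G (f i - j + 1) - G (f i - j)) / ζ)
      = (∑ i, G (f i)) / (ζ * m) := by
  have hm' : (m : ℝ) ≠ 0 := by positivity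
  have hζ' : (ζ : ℝ) ≠ 0 := ne_of_gt hζ
  calc ∑ i, ∑ j ∈ Finset.Icc 1 (f i),
        (1 / (m : ℝ)) * ((G (f i - j + 1) - G (f i - j)) / ζ)
      = ∑ i, (1 / (m : ℝ) / ζ) * ∑ j ∈ Finset.Icc 1 (f i),
          (G (f i - j + 1) - G (f i - j)) := by
        refine Finset.sum_congr rfl fun i _ => ?_
        rw [Finset.mul_sum]
        refine Finset.sum_congr rfl fun j _ => ?_
        ring
    _ = (1 / (m : ℝ) / ζ) * ∑ i, G (f i) := by
        rw [← Finset.mul_sum]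
        congr 1
        exact Finset.sum_congr rfl fun i _ => telescope_aux G hG0 (f i)
    _ = (∑ i, G (f i)) / (ζ * m) := by
        rw [div_div, one_div, inv_mul_eq_div, mul_comm (m:ℝ) ζ]
end
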